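/- In the dcpo L, every finite sequence a ∈ Σ, every copy a* ∈ Σ* of a finite sequence, and every x_{k,m} with k, m ∈ ℕ₊ is a compact element; moreover K(L) = L \ (max Σ ∪ max Σ* ∪ max X), and this set is countable. -/

import Mathlib

/-- Nonempty finite sequences of positive naturals. -/
abbrev FinSeq := {l : List ℕ+ // l ≠ []}

/-- `Sig` : nonempty finite or countably infinite sequences of positive naturals. -/
abbrev Sig := FinSeq ⊕ (ℕ → ℕ+)

/-- The substring (prefix) order on `Sig`. -/
def sigLE : Sig → Sig → Prop
  | Sum.inl a, Sum.inl b => a.val <+: b.val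
  | Sum.inl a, Sum.inr f => ∀ i : Fin a.val.length, a.val.get i = f i.val
  | Sum.inr f, Sum.inr g => f = g
  | Sum.inr _, Sum.inl _ => False

/-- A subset `D` is directed w.r.t. relation `r`. -/
def DirectedSet {A : Type _} (r : A → A → Prop) (D : Set A) : Prop :=
  D.Nonempty ∧ ∀ a ∈ D, ∀ b ∈ D, ∃ c ∈ D, r a c ∧ r b c

/-- `s` is the supremum (least upper bound) of `D` w.r.t. `r`. -/
def IsSupOf {A : Type _} (r : A → A → Prop) (D : Set A) (s : A) : Prop :=
  (∀ a ∈ D, r a s) ∧ ∀ u, (∀ a ∈ D, r a u) → r s u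

/-- `c` is a compact element w.r.t. `r`. -/
def IsCompactEl {A : Type _} (r : A → A → Prop) (c : A) : Prop :=
  ∀ D s, DirectedSet r D → IsSupOf r D s → r c s → ∃ d ∈ D, r c d

/-- `x` is maximal w.r.t. `r`. -/
def IsMaximalEl {A : Type _} (r : A → A → Prop) (x : A) : Prop :=
  ∀ y, r x y → y = x

/-- `U` is Scott open w.r.t. `r`. -/
def ScottOpen {A : Type _} (r : A → A → Prop) (U : Set A) : Prop :=
  (∀ x ∈ U, ∀ y, r x y → y ∈ U) ∧
  ∀ D s, DirectedSet r D → IsSupOf r D s → s ∈ U → ∃ d ∈ D, d ∈ U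

/-- The poset `X`: pairs `x_{m,n}` with `m ∈ ℕ₊`, `n ∈ ℕ₊ ∪ {ω}` (`ω = ⊤`). -/
abbrev XP := ℕ+ × WithTop ℕ+

/-- Order on `X`: `x_{m₁,n₁} ≤ x_{m₂,n₂}` iff `m₁ = m₂` and `n₁ ≤ n₂`. -/
def xLE : XP → XP → Prop := fun a b => a.1 = b.1 ∧ a.2 ≤ b.2

/-- The carrier of `L = X ∪ Σ ∪ Σ*`. -/
abbrev LP := XP ⊕ (Sig ⊕ Sig)

def toX (p : XP) : LP := Sum.inl p
/-- The copy `Σ` inside `L`. -/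
def toS (a : Sig) : LP := Sum.inr (Sum.inl a)
/-- The copy `Σ*` inside `L`. -/
def toS' (a : Sig) : LP := Sum.inr (Sum.inr a)

/-- Underlying sequence of an element of `Σ ∪ Σ*`. -/
def sigOf : Sig ⊕ Sig → Sig := Sum.elim id id

/-- `entryGE v k m` : the length of `v` is `≥ k+1` and its `(k+1)`-th entry is `≥ m`
(0-based index `k`). -/
def entryGE : Sig → ℕ → ℕ+ → Prop
  | Sum.inl l, k, m => ∃ h : k < l.val.length, m ≤ l.val.get ⟨k, h⟩
  | Sum.inr f, k, m => m ≤ f k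

/-- The order on `L`. -/
def lLE : LP → LP → Prop
  | Sum.inl x, Sum.inl y => xLE x y
  | Sum.inl x, Sum.inr w =>
      ∃ m : ℕ+, x.2 = (m : WithTop ℕ+) ∧ entryGE (sigOf w) x.1.natPred m
  | Sum.inr (Sum.inl a), Sum.inr w => sigLE a (sigOf w)
  | Sum.inr (Sum.inr a), Sum.inr (Sum.inr b) => sigLE a b
  | Sum.inr (Sum.inr _), Sum.inr (Sum.inl _) => False
  | Sum.inr _, Sum.inl _ => False


/-!
If a directed set `D` has a greatest element there is nothing to prove, so let it have none.
Then `D` meets cofinally the highest of the layers `Σ*`, `Σ`, `X` that it meets, and its trace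
there is directed and contains only finite elements. On such a set a strictly monotone rank
(the length of a sequence, the second index of `x_{k,m}`) is unbounded, since otherwise an
element of maximal rank would be greatest. Hence the sequences in `D` are arbitrarily long
prefixes of one sequence, or the `x_{k,n}` in `D` have unbounded `n`; a finite element below
`⋁ D` only constrains a finite initial part and so lies below a member of `D`. Conversely an
infinite sequence, in `Σ` or `Σ*`, is the supremum of its finite prefixes and `x_{k,ω}` that of
the `x_{k,n}`, without lying below any of them.
-/

section Directed

variable {A : Type*} {r : A → A → Prop} {D : Set A}

lemma DirectedSet.le_of_isMaximalEl (hD : DirectedSet r D) {m : A} (hm : m ∈ D)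
    (hmax : IsMaximalEl r m) {e : A} (he : e ∈ D) : r e m := by
  obtain ⟨b, -, heb, hmb⟩ := hD.2 e he m hm
  rwa [← hmax b hmb]

lemma DirectedSet.exists_rank_ge (hD : DirectedSet r D) (ρ : A → ℕ)
    (hρ : ∀ a ∈ D, ∀ b ∈ D, r a b → a ≠ b → ρ a < ρ b)
    (hD_top : ¬ ∃ d ∈ D, ∀ e ∈ D, r e d) (n : ℕ) : ∃ d ∈ D, n ≤ ρ d := by
  by_contra! hlt
  have hbdd : BddAbove (ρ '' D) := ⟨n, by rintro _ ⟨d, hd, rfl⟩; exact (hlt d hd).le⟩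
  obtain ⟨d, hd, hρd⟩ := Nat.sSup_mem (hD.1.image ρ) hbdd
  refine hD_top ⟨d, hd, fun e he => ?_⟩
  obtain ⟨b, hb, hdb, heb⟩ := hD.2 d hd e he
  obtain rfl | hne := eq_or_ne d b
  · exact heb
  · exact absurd (le_csSup hbdd ⟨b, hb, rfl⟩) (hρd ▸ (hρ d hd b hb hdb hne).not_ge)

lemma directedSet_range {ι : Type*} [SemilatticeSup ι] [Nonempty ι] {u : ι → A}
    (hu : ∀ i j, i ≤ j → r (u i) (u j)) : DirectedSet r (Set.range u) := by
  refine ⟨Set.range_nonempty u, ?_⟩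
  rintro _ ⟨i, rfl⟩ _ ⟨j, rfl⟩
  exact ⟨u (i ⊔ j), ⟨_, rfl⟩, hu _ _ le_sup_left, hu _ _ le_sup_right⟩

lemma not_isCompactEl_of_isSupOf {c : A} (hc : r c c) (hD : DirectedSet r D)
    (hs : IsSupOf r D c) (hlt : ∀ d ∈ D, ¬ r c d) : ¬ IsCompactEl r c := fun h =>
  let ⟨d, hd, hcd⟩ := h D c hD hs hc
  hlt d hd hcd

section Preimage

variable [IsTrans A r] {B : Type*} {rB : B → B → Prop} {f : B → A}

lemma DirectedSet.preimage (hD : DirectedSet r D) (hf : ∀ a b, r (f a) (f b) ↔ rB a b)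
    (hcof : ∀ d ∈ D, ∃ b, f b ∈ D ∧ r d (f b)) : DirectedSet rB (f ⁻¹' D) := by
  refine ⟨?_, fun a ha a' ha' => ?_⟩
  · obtain ⟨d, hd⟩ := hD.1
    obtain ⟨b, hb, -⟩ := hcof d hd
    exact ⟨b, hb⟩
  · obtain ⟨d, hd, had, had'⟩ := hD.2 _ ha _ ha'
    obtain ⟨b, hb, hdb⟩ := hcof d hd
    exact ⟨b, hb, (hf _ _).1 (_root_.trans had hdb), (hf _ _).1 (_root_.trans had' hdb)⟩

lemma exists_greatest_of_preimage (hf : ∀ a b, r (f a) (f b) ↔ rB a b)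
    (hcof : ∀ d ∈ D, ∃ b, f b ∈ D ∧ r d (f b)) (h : ∃ a ∈ f ⁻¹' D, ∀ e ∈ f ⁻¹' D, rB e a) :
    ∃ d ∈ D, ∀ e ∈ D, r e d := by
  obtain ⟨a, ha, hmax⟩ := h
  refine ⟨f a, ha, fun e he => ?_⟩
  obtain ⟨b, hb, heb⟩ := hcof e he
  exact _root_.trans heb ((hf _ _).2 (hmax b hb))

end Preimage

end Directed

section Sig

lemma sigLE_inl_inr_iff {a : FinSeq} {f : ℕ → ℕ+} :
    sigLE (Sum.inl a) (Sum.inr f) ↔ ∀ i (h : i < a.val.length), a.val[i] = f i :=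
  ⟨fun h i hi => h ⟨i, hi⟩, fun h i => h i i.isLt⟩

lemma sigLE_refl (a : Sig) : sigLE a a := by
  rcases a with a | f
  exacts [List.prefix_refl _, rfl]

lemma sigLE_trans {a b c : Sig} (hab : sigLE a b) (hbc : sigLE b c) : sigLE a c := by
  rcases a with a | f <;> rcases b with b | g <;> rcases c with c | h <;>
    simp only [sigLE] at hab hbc ⊢
  · exact hab.trans hbc
  · exact sigLE_inl_inr_iff.2 fun i hi =>
      (hab.getElem hi).trans (sigLE_inl_inr_iff.1 hbc i (hi.trans_le hab.length_le))
  · exact hbc ▸ hab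
  · exact hab.trans hbc

lemma isMaximalEl_inr (f : ℕ → ℕ+) : IsMaximalEl sigLE (Sum.inr f) := by
  rintro (b | g) h
  exacts [h.elim, congrArg Sum.inr h.symm]

lemma sigLE_inl_of_sigLE_of_length_le {l a : FinSeq} {σ : Sig} (hl : sigLE (Sum.inl l) σ)
    (ha : sigLE (Sum.inl a) σ) (hlen : l.val.length ≤ a.val.length) :
    sigLE (Sum.inl l) (Sum.inl a) := by
  rcases σ with b | f
  · exact List.prefix_of_prefix_length_le hl ha hlen
  · rw [sigLE_inl_inr_iff] at hl ha
    exact List.prefix_iff_getElem.2 ⟨hlen, fun i hi => (hl i hi).trans (ha i _).symm⟩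

lemma entryGE_mono {σ : Sig} {k : ℕ} {m m' : ℕ+} (hm : m' ≤ m) (h : entryGE σ k m) :
    entryGE σ k m' := by
  rcases σ with l | f
  · obtain ⟨hk, hge⟩ := h
    exact ⟨hk, hm.trans hge⟩
  · exact (hm.trans h : m' ≤ f k)

lemma entryGE_of_sigLE {σ τ : Sig} {k : ℕ} {m : ℕ+} (hστ : sigLE σ τ) (h : entryGE σ k m) :
    entryGE τ k m := by
  rcases σ with a | f <;> rcases τ with b | g <;> simp only [sigLE] at hστ
  · obtain ⟨hk, hge⟩ := h
    refine ⟨hk.trans_le hστ.length_le, ?_⟩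
    simpa only [List.get_eq_getElem, hστ.getElem hk] using hge
  · obtain ⟨hk, hge⟩ := h
    show m ≤ g k
    simpa only [List.get_eq_getElem, sigLE_inl_inr_iff.1 hστ k hk] using hge
  · exact hστ ▸ h

lemma entryGE_inl_of_sigLE {a : FinSeq} {σ : Sig} {k : ℕ} {m : ℕ+} (h : entryGE σ k m)
    (ha : sigLE (Sum.inl a) σ) (hk : k < a.val.length) : entryGE (Sum.inl a) k m := by
  refine ⟨hk, ?_⟩
  rcases σ with b | f
  · obtain ⟨_, hge⟩ := h
    simpa only [List.get_eq_getElem, ha.getElem hk] using hge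
  · have hfk : m ≤ f k := h
    simpa only [List.get_eq_getElem, sigLE_inl_inr_iff.1 ha k hk] using hfk

lemma exists_not_entryGE (σ : Sig) (k : ℕ) : ∃ m, ¬ entryGE σ k m := by
  rcases σ with l | f
  · by_cases hk : k < l.val.length
    · exact ⟨l.val[k] + 1, fun ⟨_, h⟩ => (PNat.lt_add_right _ _).not_ge h⟩
    · exact ⟨1, fun ⟨h, _⟩ => hk h⟩
  · exact ⟨f k + 1, (PNat.lt_add_right _ _).not_ge⟩

lemma DirectedSet.exists_length_ge {D : Set Sig} (hD : DirectedSet sigLE D)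
    (hD_top : ¬ ∃ d ∈ D, ∀ e ∈ D, sigLE e d) (n : ℕ) :
    ∃ l : FinSeq, Sum.inl l ∈ D ∧ n ≤ l.val.length := by
  have hfin : ∀ f, Sum.inr f ∉ D := fun f hf =>
    hD_top ⟨_, hf, fun e he => hD.le_of_isMaximalEl hf (isMaximalEl_inr f) he⟩
  have hρ : ∀ a ∈ D, ∀ b ∈ D, sigLE a b → a ≠ b →
      Sum.elim (fun l : FinSeq => l.val.length) (fun _ => 0) a <
        Sum.elim (fun l : FinSeq => l.val.length) (fun _ => 0) b := by
    rintro (a | f) ha (b | g) hb hab hne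
    · exact lt_of_le_of_ne hab.length_le fun h =>
        hne (congrArg _ (Subtype.ext (hab.eq_of_length h)))
    all_goals exact absurd ‹_ ∈ D› (hfin _)
  obtain ⟨(l | f), hl, hn⟩ := hD.exists_rank_ge _ hρ hD_top n
  exacts [⟨l, hl, hn⟩, absurd hl (hfin f)]

def pfx (f : ℕ → ℕ+) (n : ℕ) : FinSeq :=
  ⟨List.ofFn fun i : Fin (n + 1) => f i, by simp⟩

lemma pfx_length (f : ℕ → ℕ+) (n : ℕ) : (pfx f n).val.length = n + 1 := by
  simp [pfx]

lemma sigLE_pfx (f : ℕ → ℕ+) (n : ℕ) : sigLE (Sum.inl (pfx f n)) (Sum.inr f) :=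
  sigLE_inl_inr_iff.2 fun i _ => by simp only [pfx, List.getElem_ofFn]

lemma pfx_mono (f : ℕ → ℕ+) {m n : ℕ} (h : m ≤ n) :
    sigLE (Sum.inl (pfx f m)) (Sum.inl (pfx f n)) :=
  sigLE_inl_of_sigLE_of_length_le (sigLE_pfx f m) (sigLE_pfx f n) (by simp [pfx_length, h])

lemma eq_inr_of_forall_pfx_le {f : ℕ → ℕ+} {σ : Sig} (h : ∀ n, sigLE (Sum.inl (pfx f n)) σ) :
    σ = Sum.inr f := by
  rcases σ with b | g
  · have := (h b.val.length).length_le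
    rw [pfx_length] at this
    omega
  · refine congrArg Sum.inr (funext fun i => ?_)
    have := sigLE_inl_inr_iff.1 (h i) i (by rw [pfx_length]; omega)
    simpa only [pfx, List.getElem_ofFn] using this.symm

end Sig

lemma lLE_refl (x : LP) : lLE x x := by
  rcases x with p | a | a
  exacts [⟨rfl, le_rfl⟩, sigLE_refl a, sigLE_refl a]

lemma lLE_trans {x y z : LP} (hxy : lLE x y) (hyz : lLE y z) : lLE x z := by
  rcases x with p | a | a <;> rcases y with q | b | b <;> rcases z with t | c | c <;>
    simp only [lLE, sigOf, Sum.elim_inl, Sum.elim_inr, id] at hxy hyz ⊢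
  · exact ⟨hxy.1.trans hyz.1, hxy.2.trans hyz.2⟩
  any_goals exact sigLE_trans hxy hyz
  all_goals first
    | obtain ⟨m, hm, he⟩ := hxy
      exact ⟨m, hm, entryGE_of_sigLE hyz he⟩
    | obtain ⟨m, hm, he⟩ := hyz
      obtain ⟨m', hm', hle⟩ := WithTop.le_coe_iff.1 (hm ▸ hxy.2)
      exact ⟨m', hm', hxy.1 ▸ entryGE_mono hle he⟩

instance : IsTrans LP lLE := ⟨fun _ _ _ => lLE_trans⟩

lemma isMaximalEl_top (k : ℕ+) : IsMaximalEl xLE (k, ⊤) := by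
  rintro ⟨k', t⟩ ⟨hk, ht⟩
  simp only at hk ht
  rw [← hk, top_le_iff.1 ht]

lemma DirectedSet.exists_fst_eq_and_unbounded {D : Set XP} (hD : DirectedSet xLE D)
    (hD_top : ¬ ∃ d ∈ D, ∀ e ∈ D, xLE e d) :
    ∃ k, (∀ p ∈ D, p.1 = k) ∧ ∀ m : ℕ+, ∃ n : ℕ+, m ≤ n ∧ (k, (n : WithTop ℕ+)) ∈ D := by
  obtain ⟨p₀, hp₀⟩ := hD.1
  have hfst : ∀ p ∈ D, p.1 = p₀.1 := fun p hp =>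
    let ⟨_, _, hpq, hp₀q⟩ := hD.2 p hp p₀ hp₀
    hpq.1.trans hp₀q.1.symm
  have hfin : ∀ p ∈ D, p.2 ≠ ⊤ := fun p hp htop => hD_top ⟨p, hp, fun e he =>
    hD.le_of_isMaximalEl hp (by rw [← Prod.mk.eta (p := p), htop]; exact isMaximalEl_top _) he⟩
  have hρ : ∀ a ∈ D, ∀ b ∈ D, xLE a b → a ≠ b →
      ((a.2.untopD 1 : ℕ+) : ℕ) < ((b.2.untopD 1 : ℕ+) : ℕ) := by
    rintro ⟨i, s⟩ ha ⟨j, t⟩ hb ⟨hij, hst⟩ hne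
    obtain ⟨x, rfl⟩ := WithTop.ne_top_iff_exists.1 (hfin _ ha)
    obtain ⟨y, rfl⟩ := WithTop.ne_top_iff_exists.1 (hfin _ hb)
    simp only at hij hst
    subst hij
    simp only [WithTop.untopD_coe, PNat.coe_lt_coe]
    exact lt_of_le_of_ne (WithTop.coe_le_coe.1 hst) (by rintro rfl; exact hne rfl)
  refine ⟨p₀.1, hfst, fun m => ?_⟩
  obtain ⟨⟨k, t⟩, hp, hmn⟩ := hD.exists_rank_ge _ hρ hD_top m
  obtain ⟨n, rfl⟩ := WithTop.ne_top_iff_exists.1 (hfin _ hp)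
  refine ⟨n, ?_, hfst _ hp ▸ hp⟩
  simpa only [WithTop.untopD_coe, PNat.coe_le_coe] using hmn

lemma exists_eq_toS'_of_toS'_le {a : Sig} {z : LP} (h : lLE (toS' a) z) : ∃ b, z = toS' b := by
  rcases z with p | b | b
  exacts [h.elim, h.elim, ⟨b, rfl⟩]

lemma exists_eq_inr_of_toS_le {a : Sig} {z : LP} (h : lLE (toS a) z) : ∃ w, z = Sum.inr w := by
  rcases z with p | w
  exacts [h.elim, ⟨w, rfl⟩]

def IsFiniteEl (c : LP) : Prop :=
  (∃ l : FinSeq, c = toS (Sum.inl l)) ∨ (∃ l : FinSeq, c = toS' (Sum.inl l)) ∨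
    ∃ k m : ℕ+, c = toX (k, (m : WithTop ℕ+))

section Compact

variable {c s : LP} {D : Set LP}

lemma exists_le_of_toS'_mem (hc : IsFiniteEl c) (hD : DirectedSet lLE D) (hs : IsSupOf lLE D s)
    (hcs : lLE c s) (hD_top : ¬ ∃ d ∈ D, ∀ e ∈ D, lLE e d) {a₀ : Sig} (ha₀ : toS' a₀ ∈ D) :
    ∃ d ∈ D, lLE c d := by
  have hf : ∀ a b, lLE (toS' a) (toS' b) ↔ sigLE a b := fun _ _ => Iff.rfl
  have hcof : ∀ d ∈ D, ∃ b, toS' b ∈ D ∧ lLE d (toS' b) := fun d hd => by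
    obtain ⟨b, hb, hdb, hab⟩ := hD.2 d hd _ ha₀
    obtain ⟨b', rfl⟩ := exists_eq_toS'_of_toS'_le hab
    exact ⟨b', hb, hdb⟩
  have hlong := (hD.preimage hf hcof).exists_length_ge
    fun h => hD_top (exists_greatest_of_preimage hf hcof h)
  obtain ⟨σ, rfl⟩ := exists_eq_toS'_of_toS'_le (hs.1 _ ha₀)
  rcases hc with ⟨l, rfl⟩ | ⟨l, rfl⟩ | ⟨k, m, rfl⟩
  · obtain ⟨a, ha, hlen⟩ := hlong l.val.length
    exact ⟨_, ha, sigLE_inl_of_sigLE_of_length_le hcs (hs.1 _ ha) hlen⟩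
  · obtain ⟨a, ha, hlen⟩ := hlong l.val.length
    exact ⟨_, ha, sigLE_inl_of_sigLE_of_length_le hcs (hs.1 _ ha) hlen⟩
  · obtain ⟨m', hm', he⟩ := hcs
    obtain ⟨a, ha, hlen⟩ := hlong (k.natPred + 1)
    exact ⟨_, ha, m', hm', entryGE_inl_of_sigLE he (hs.1 _ ha) hlen⟩

lemma exists_le_of_toS_mem (hc : IsFiniteEl c) (hD : DirectedSet lLE D) (hs : IsSupOf lLE D s)
    (hcs : lLE c s) (hD_top : ¬ ∃ d ∈ D, ∀ e ∈ D, lLE e d) (hS' : ∀ a, toS' a ∉ D)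
    {a₀ : Sig} (ha₀ : toS a₀ ∈ D) : ∃ d ∈ D, lLE c d := by
  have hf : ∀ a b, lLE (toS a) (toS b) ↔ sigLE a b := fun _ _ => Iff.rfl
  have hcof : ∀ d ∈ D, ∃ b, toS b ∈ D ∧ lLE d (toS b) := fun d hd => by
    obtain ⟨b, hb, hdb, hab⟩ := hD.2 d hd _ ha₀
    obtain ⟨b' | b', rfl⟩ := exists_eq_inr_of_toS_le hab
    exacts [⟨b', hb, hdb⟩, absurd hb (hS' b')]
  have hlong := (hD.preimage hf hcof).exists_length_ge
    fun h => hD_top (exists_greatest_of_preimage hf hcof h)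
  obtain ⟨w, rfl⟩ := exists_eq_inr_of_toS_le (hs.1 _ ha₀)
  -- `toS (sigOf w)` is an upper bound of `D` too, so `c` lies below it and not in `Σ*`.
  have hub : ∀ d ∈ D, lLE d (toS (sigOf w)) := fun d hd =>
    let ⟨b, hb, hdb⟩ := hcof d hd
    lLE_trans hdb (hs.1 _ hb)
  have hcu := lLE_trans hcs (hs.2 _ hub)
  rcases hc with ⟨l, rfl⟩ | ⟨l, rfl⟩ | ⟨k, m, rfl⟩
  · obtain ⟨a, ha, hlen⟩ := hlong l.val.length
    exact ⟨_, ha, sigLE_inl_of_sigLE_of_length_le hcs (hs.1 _ ha) hlen⟩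
  · exact hcu.elim
  · obtain ⟨m', hm', he⟩ := hcs
    obtain ⟨a, ha, hlen⟩ := hlong (k.natPred + 1)
    exact ⟨_, ha, m', hm', entryGE_inl_of_sigLE he (hs.1 _ ha) hlen⟩

lemma exists_le_of_subset_range_toX (hc : IsFiniteEl c) (hD : DirectedSet lLE D)
    (hs : IsSupOf lLE D s) (hcs : lLE c s) (hD_top : ¬ ∃ d ∈ D, ∀ e ∈ D, lLE e d)
    (hX : D ⊆ Set.range toX) : ∃ d ∈ D, lLE c d := by
  have hf : ∀ a b, lLE (toX a) (toX b) ↔ xLE a b := fun _ _ => Iff.rfl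
  have hcof : ∀ d ∈ D, ∃ p, toX p ∈ D ∧ lLE d (toX p) := fun d hd => by
    obtain ⟨p, rfl⟩ := hX hd
    exact ⟨p, hd, lLE_refl _⟩
  obtain ⟨k, hk, hunb⟩ := (hD.preimage hf hcof).exists_fst_eq_and_unbounded
    fun h => hD_top (exists_greatest_of_preimage hf hcof h)
  have hub : ∀ d ∈ D, lLE d (toX (k, ⊤)) := fun d hd => by
    obtain ⟨p, rfl⟩ := hX hd
    exact ⟨hk p hd, le_top⟩
  have hcu := lLE_trans hcs (hs.2 _ hub)
  rcases hc with ⟨l, rfl⟩ | ⟨l, rfl⟩ | ⟨k', m, rfl⟩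
  · exact hcu.elim
  · exact hcu.elim
  · obtain ⟨n, hmn, hn⟩ := hunb m
    exact ⟨_, hn, hcu.1, WithTop.coe_le_coe.2 hmn⟩

lemma IsFiniteEl.isCompactEl (hc : IsFiniteEl c) : IsCompactEl lLE c := by
  intro D s hD hs hcs
  by_cases hD_top : ∃ d ∈ D, ∀ e ∈ D, lLE e d
  · obtain ⟨d, hd, hed⟩ := hD_top
    exact ⟨d, hd, lLE_trans hcs (hs.2 d hed)⟩
  by_cases hS' : ∃ a, toS' a ∈ D
  · obtain ⟨a, ha⟩ := hS'
    exact exists_le_of_toS'_mem hc hD hs hcs hD_top ha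
  push Not at hS'
  by_cases hS : ∃ a, toS a ∈ D
  · obtain ⟨a, ha⟩ := hS
    exact exists_le_of_toS_mem hc hD hs hcs hD_top hS' ha
  push Not at hS
  refine exists_le_of_subset_range_toX hc hD hs hcs hD_top fun d hd => ?_
  rcases d with p | a | a
  exacts [⟨p, rfl⟩, absurd hd (hS a), absurd hd (hS' a)]

end Compact

lemma isSupOf_range_toX (k : ℕ+) :
    IsSupOf lLE (Set.range fun n : ℕ+ => toX (k, n)) (toX (k, ⊤)) := by
  refine ⟨by rintro _ ⟨n, rfl⟩; exact ⟨rfl, le_top⟩, fun u hu => ?_⟩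
  have hu' : ∀ n : ℕ+, lLE (toX (k, n)) u := fun n => hu _ ⟨n, rfl⟩
  rcases u with ⟨k', t⟩ | w
  · refine ⟨(hu' 1).1, le_of_eq (WithTop.eq_top_iff_forall_gt.2 fun n => ?_).symm⟩
    exact (WithTop.coe_lt_coe.2 (PNat.lt_add_right n 1)).trans_le (hu' (n + 1)).2
  · obtain ⟨m, hm⟩ := exists_not_entryGE (sigOf w) k.natPred
    obtain ⟨m', hm', he⟩ := hu' m
    exact (hm (WithTop.coe_injective hm' ▸ he)).elim

lemma not_isCompactEl_toX_top (k : ℕ+) : ¬ IsCompactEl lLE (toX (k, ⊤)) :=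
  not_isCompactEl_of_isSupOf (lLE_refl _)
    (directedSet_range (u := fun n : ℕ+ => toX (k, n)) fun _ _ h => ⟨rfl, WithTop.coe_le_coe.2 h⟩)
    (isSupOf_range_toX k)
    (by rintro _ ⟨n, rfl⟩ h; exact (WithTop.coe_lt_top n).not_ge h.2)

lemma not_isCompactEl_toS_inr (f : ℕ → ℕ+) : ¬ IsCompactEl lLE (toS (Sum.inr f)) := by
  refine not_isCompactEl_of_isSupOf (lLE_refl _)
    (directedSet_range (u := fun n => toS (Sum.inl (pfx f n))) fun _ _ h => pfx_mono f h)
    ⟨?_, fun u hu => ?_⟩ ?_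
  · rintro _ ⟨n, rfl⟩
    exact sigLE_pfx f n
  · obtain ⟨w, rfl⟩ := exists_eq_inr_of_toS_le (hu _ ⟨0, rfl⟩)
    show sigLE _ (sigOf w)
    rw [eq_inr_of_forall_pfx_le fun n => hu _ ⟨n, rfl⟩]
    exact sigLE_refl _
  · rintro _ ⟨n, rfl⟩ h
    exact h

lemma not_isCompactEl_toS'_inr (f : ℕ → ℕ+) : ¬ IsCompactEl lLE (toS' (Sum.inr f)) := by
  refine not_isCompactEl_of_isSupOf (lLE_refl _)
    (directedSet_range (u := fun n => toS' (Sum.inl (pfx f n))) fun _ _ h => pfx_mono f h)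
    ⟨?_, fun u hu => ?_⟩ ?_
  · rintro _ ⟨n, rfl⟩
    exact sigLE_pfx f n
  · obtain ⟨σ, rfl⟩ := exists_eq_toS'_of_toS'_le (hu _ ⟨0, rfl⟩)
    show sigLE _ σ
    rw [eq_inr_of_forall_pfx_le fun n => hu _ ⟨n, rfl⟩]
    exact sigLE_refl _
  · rintro _ ⟨n, rfl⟩ h
    exact h

lemma isFiniteEl_iff (u : LP) :
    IsFiniteEl u ↔ ¬ ((∃ f : ℕ → ℕ+, u = toS (Sum.inr f)) ∨
      (∃ f : ℕ → ℕ+, u = toS' (Sum.inr f)) ∨ (∃ m : ℕ+, u = toX (m, ⊤))) := by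
  rcases u with ⟨k, t⟩ | (l | f) | (l | f)
  · induction t using WithTop.recTopCoe <;> simp [IsFiniteEl, toS, toS', toX]
  all_goals simp [IsFiniteEl, toS, toS', toX]

lemma isCompactEl_iff_isFiniteEl (u : LP) : IsCompactEl lLE u ↔ IsFiniteEl u := by
  refine ⟨fun hu => (isFiniteEl_iff u).2 ?_, IsFiniteEl.isCompactEl⟩
  rintro (⟨f, rfl⟩ | ⟨f, rfl⟩ | ⟨m, rfl⟩)
  exacts [not_isCompactEl_toS_inr f hu, not_isCompactEl_toS'_inr f hu,
    not_isCompactEl_toX_top m hu]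

lemma countable_setOf_isFiniteEl : {u : LP | IsFiniteEl u}.Countable := by
  refine ((Set.countable_range fun l : FinSeq => toS (Sum.inl l)).union
    ((Set.countable_range fun l : FinSeq => toS' (Sum.inl l)).union
      (Set.countable_range fun p : ℕ+ × ℕ+ => toX (p.1, p.2)))).mono ?_
  rintro u (⟨l, rfl⟩ | ⟨l, rfl⟩ | ⟨k, m, rfl⟩)
  exacts [Or.inl ⟨l, rfl⟩, Or.inr (Or.inl ⟨l, rfl⟩), Or.inr (Or.inr ⟨(k, m), rfl⟩)]

theorem stmt16 :
    (∀ l : FinSeq, IsCompactEl lLE (toS (Sum.inl l))) ∧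
    (∀ l : FinSeq, IsCompactEl lLE (toS' (Sum.inl l))) ∧
    (∀ k m : ℕ+, IsCompactEl lLE (toX (k, (m : WithTop ℕ+)))) ∧
    (∀ u : LP, IsCompactEl lLE u ↔
      ¬ ((∃ f : ℕ → ℕ+, u = toS (Sum.inr f)) ∨
         (∃ f : ℕ → ℕ+, u = toS' (Sum.inr f)) ∨
         (∃ m : ℕ+, u = toX (m, ⊤)))) ∧
    {u : LP | IsCompactEl lLE u}.Countable := by
  refine ⟨fun l => IsFiniteEl.isCompactEl (Or.inl ⟨l, rfl⟩),
    fun l => IsFiniteEl.isCompactEl (Or.inr (Or.inl ⟨l, rfl⟩)),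
    fun k m => IsFiniteEl.isCompactEl (Or.inr (Or.inr ⟨k, m, rfl⟩)),
    fun u => (isCompactEl_iff_isFiniteEl u).trans (isFiniteEl_iff u), ?_⟩
  simpa only [isCompactEl_iff_isFiniteEl] using countable_setOf_isFiniteEl
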